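/- Let (L, (h_1, …, h_m)) be a backward self-similar system such that L_x is connected for every infinite word x ∈ {1, …, m}^ℕ. For each k ≥ 1 let c_k denote the (finite) number of connected components of the graph Γ_k. Then: (i) c_k ≤ c_{k+1} for every k; (ii) the sequence (c_k)_{k≥1} is bounded if and only if L has finitely many connected components; and (iii) if L has finitely many connected components, say N of them, then c_k = N for all sufficiently large k. -/

import Mathlib

open Set

/-- `h_w⁻¹(L)` for a finite word `w = (w₁, …, w_k)`, encoded as the list `[w₁, …, w_k]`,
namely `h_{w₁}⁻¹(h_{w₂}⁻¹(⋯ h_{w_k}⁻¹(L) ⋯))`. -/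
def bwdPre {X : Type*} {m : ℕ} (h : Fin m → X → X) (L : Set X) : List (Fin m) → Set X
  | [] => L
  | a :: w => h a ⁻¹' bwdPre h L w

/-- The truncation `x|k` of an infinite word `x`. -/
def wordTrunc {m : ℕ} (x : ℕ → Fin m) (k : ℕ) : List (Fin m) :=
  List.ofFn fun i : Fin k => x i.val

/-- `L_x = ⋂_{j ≥ 1} h_{x|j}⁻¹(L)`. -/
def bwdLimSet {X : Type*} {m : ℕ} (h : Fin m → X → X) (L : Set X) (x : ℕ → Fin m) : Set X :=
  ⋂ j : ℕ, bwdPre h L (wordTrunc x (j + 1))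

/-- The graph `Γ_k`: vertices are the words of length `k`, and two distinct words `w, w'`
are adjacent iff `h_w⁻¹(L) ∩ h_{w'}⁻¹(L) ≠ ∅`. -/
def bwdGraph {X : Type*} {m : ℕ} (h : Fin m → X → X) (L : Set X) (k : ℕ) :
    SimpleGraph (Fin k → Fin m) where
  Adj w w' := w ≠ w' ∧ (bwdPre h L (List.ofFn w) ∩ bwdPre h L (List.ofFn w')).Nonempty
  symm := by
    constructor
    intro w w' hw
    obtain ⟨hne, hx⟩ := hw
    exact ⟨hne.symm, by rwa [Set.inter_comm] at hx⟩
  loopless := by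
    constructor
    intro w hw
    exact hw.1 rfl

set_option linter.unusedSectionVars false
set_option linter.unusedVariables false

section Aux
variable {X : Type*} [MetricSpace X] {m : ℕ} {h : Fin m → X → X} {L : Set X}

lemma bwdPre_subset (hinv : L = ⋃ j, h j ⁻¹' L) : ∀ w : List (Fin m), bwdPre h L w ⊆ L
  | [] => subset_rfl
  | a :: w => by
      intro x hx
      have hax : h a x ∈ L := bwdPre_subset hinv w hx
      rw [hinv]
      exact mem_iUnion.2 ⟨a, hax⟩

lemma bwdPre_append_subset (hinv : L = ⋃ j, h j ⁻¹' L) :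
    ∀ u v : List (Fin m), bwdPre h L (u ++ v) ⊆ bwdPre h L u
  | [], v => bwdPre_subset hinv v
  | a :: u, v => fun x hx => bwdPre_append_subset hinv u v hx

lemma bwdPre_isClosed (hcont : ∀ j, Continuous (h j)) (hLc : IsClosed L) :
    ∀ w : List (Fin m), IsClosed (bwdPre h L w)
  | [] => hLc
  | a :: w => (bwdPre_isClosed hcont hLc w).preimage (hcont a)

lemma bwdPre_inter_nonempty (hLne : L.Nonempty) (hinv : L = ⋃ j, h j ⁻¹' L)
    (hfib : ∀ z ∈ L, ∀ j, (h j ⁻¹' ({z} : Set X)).Nonempty) :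
    ∀ w : List (Fin m), (bwdPre h L w ∩ L).Nonempty
  | [] => by simpa [bwdPre] using hLne
  | a :: w => by
      obtain ⟨z, hz1, hz2⟩ := bwdPre_inter_nonempty hLne hinv hfib w
      obtain ⟨y, hy⟩ := hfib z hz2 a
      have hyz : h a y = z := hy
      refine ⟨y, ?_, ?_⟩
      · show h a y ∈ bwdPre h L w
        rw [hyz]; exact hz1
      · rw [hinv]
        exact mem_iUnion.2 ⟨a, show h a y ∈ L by rw [hyz]; exact hz2⟩

lemma bwdPre_nonempty (hLne : L.Nonempty) (hinv : L = ⋃ j, h j ⁻¹' L)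
    (hfib : ∀ z ∈ L, ∀ j, (h j ⁻¹' ({z} : Set X)).Nonempty) (w : List (Fin m)) :
    (bwdPre h L w).Nonempty :=
  (bwdPre_inter_nonempty hLne hinv hfib w).mono inter_subset_left

lemma exists_word (hinv : L = ⋃ j, h j ⁻¹' L) :
    ∀ (k : ℕ), ∀ x ∈ L, ∃ w : Fin k → Fin m, x ∈ bwdPre h L (List.ofFn w)
  | 0, x, hx => ⟨fun i => i.elim0, by simpa [List.ofFn_zero, bwdPre] using hx⟩
  | (k+1), x, hx => by
      rw [hinv] at hx
      obtain ⟨a, ha⟩ := mem_iUnion.1 hx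
      obtain ⟨w, hw⟩ := exists_word hinv k (h a x) ha
      refine ⟨Fin.cons a w, ?_⟩
      have : List.ofFn (Fin.cons a w : Fin (k+1) → Fin m) = a :: List.ofFn w := by
        simp [List.ofFn_succ]
      rw [this]
      exact hw

lemma wordTrunc_succ (x : ℕ → Fin m) (k : ℕ) :
    wordTrunc x (k + 1) = wordTrunc x k ++ [x k] := by
  rw [wordTrunc, List.ofFn_succ']
  simp [wordTrunc, List.concat_eq_append]

end Aux

section Aux2
variable {X : Type*} [MetricSpace X] {m : ℕ} {h : Fin m → X → X} {L : Set X}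

lemma walk_subset {n : ℕ} {A : Set X}
    (hdich : ∀ w : Fin n → Fin m,
      bwdPre h L (List.ofFn w) ⊆ A ∨ bwdPre h L (List.ofFn w) ∩ A = ∅)
    {u v : Fin n → Fin m} (p : (bwdGraph h L n).Walk u v)
    (hu : bwdPre h L (List.ofFn u) ⊆ A) : bwdPre h L (List.ofFn v) ⊆ A := by
  induction p with
  | nil => exact hu
  | @cons a b c hadj p ih =>
      apply ih
      obtain ⟨hne, z, hz1, hz2⟩ := hadj
      rcases hdich b with h1 | h2
      · exact h1
      · exact absurd (Set.mem_inter hz2 (hu hz1)) (by rw [h2]; exact notMem_empty z)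

lemma comp_subset {n : ℕ} {A : Set X}
    (hdich : ∀ w : Fin n → Fin m,
      bwdPre h L (List.ofFn w) ⊆ A ∨ bwdPre h L (List.ofFn w) ∩ A = ∅)
    {u v : Fin n → Fin m}
    (hc : (bwdGraph h L n).connectedComponentMk u = (bwdGraph h L n).connectedComponentMk v)
    (hu : bwdPre h L (List.ofFn u) ⊆ A) : bwdPre h L (List.ofFn v) ⊆ A := by
  obtain ⟨p⟩ := (SimpleGraph.ConnectedComponent.eq).1 hc
  exact walk_subset hdich p hu

lemma preconn_subset_of_closed {E A B : Set X} (hE : IsPreconnected E) (hA : IsClosed A)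
    (hB : IsClosed B) (hd : Disjoint A B) (hsub : E ⊆ A ∪ B) (hne : (E ∩ A).Nonempty) :
    E ⊆ A := by
  obtain ⟨U, V, hU, hV, hAU, hBV, hUV⟩ := NormalSpace.normal A B hA hB hd
  have hEU : E ⊆ U :=
    hE.subset_left_of_subset_union hU hV hUV
      (hsub.trans (Set.union_subset_union hAU hBV))
      (hne.mono (Set.inter_subset_inter_right _ hAU))
  intro x hx
  rcases hsub hx with hxA | hxB
  · exact hxA
  · exact absurd (hBV hxB) (fun hxV => Set.disjoint_left.1 hUV (hEU hx) hxV)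
end Aux2

section Aux3
variable {X : Type*} [MetricSpace X] {m : ℕ} {h : Fin m → X → X} {L : Set X}

lemma eventually_dichotomy (hm : 1 ≤ m)
    (hcont : ∀ j, Continuous (h j)) (hLne : L.Nonempty) (hLcp : IsCompact L)
    (hinv : L = ⋃ j, h j ⁻¹' L)
    (hfib : ∀ z ∈ L, ∀ j, (h j ⁻¹' ({z} : Set X)).Nonempty)
    (hconn : ∀ x : ℕ → Fin m, IsConnected (bwdLimSet h L x))
    {A B : Set X} (hA : IsClosed A) (hB : IsClosed B) (hAB : A ∪ B = L)
    (hd : Disjoint A B) :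
    ∃ K : ℕ, ∀ w : List (Fin m), K ≤ w.length →
      bwdPre h L w ⊆ A ∨ bwdPre h L w ⊆ B := by
  classical
  by_contra hcon
  push_neg at hcon
  have hLc : IsClosed L := hLcp.isClosed
  set Meets : List (Fin m) → Prop :=
    fun w => (bwdPre h L w ∩ A).Nonempty ∧ (bwdPre h L w ∩ B).Nonempty with hMdef
  -- bad words of every exact length
  have hmeets : ∀ k : ℕ, ∃ w : List (Fin m), w.length = k ∧ Meets w := by
    intro k
    obtain ⟨w, hlen, hnA, hnB⟩ := hcon k
    have hMw : Meets w := by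
      constructor
      · obtain ⟨z, hz, hzB⟩ := Set.not_subset.1 hnB
        have hzL : z ∈ L := bwdPre_subset hinv w hz
        rw [← hAB] at hzL
        rcases hzL with hzA | hzB'
        · exact ⟨z, hz, hzA⟩
        · exact absurd hzB' hzB
      · obtain ⟨z, hz, hzA⟩ := Set.not_subset.1 hnA
        have hzL : z ∈ L := bwdPre_subset hinv w hz
        rw [← hAB] at hzL
        rcases hzL with hzA' | hzB
        · exact absurd hzA' hzA
        · exact ⟨z, hz, hzB⟩
    have hsub : bwdPre h L w ⊆ bwdPre h L (w.take k) := by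
      have h2 := bwdPre_append_subset hinv (w.take k) (w.drop k)
      rwa [List.take_append_drop] at h2
    refine ⟨w.take k, by simp [List.length_take]; omega, ?_, ?_⟩
    · exact hMw.1.mono (Set.inter_subset_inter_left _ hsub)
    · exact hMw.2.mono (Set.inter_subset_inter_left _ hsub)
  -- compactness in the word space
  letI : TopologicalSpace (Fin m) := ⊥
  haveI : DiscreteTopology (Fin m) := ⟨rfl⟩
  set S : ℕ → Set (ℕ → Fin m) := fun k => {x | Meets (wordTrunc x k)} with hSdef
  have hSclosed : ∀ k, IsClosed (S k) := by
    intro k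
    have heq : S k = (fun (x : ℕ → Fin m) (i : Fin k) => x i.val) ⁻¹'
        {v : Fin k → Fin m | Meets (List.ofFn v)} := rfl
    rw [heq]
    exact (isClosed_discrete _).preimage (continuous_pi fun i => continuous_apply i.val)
  have hSanti : ∀ k, S (k+1) ⊆ S k := by
    intro k x hx
    have hsub : bwdPre h L (wordTrunc x (k+1)) ⊆ bwdPre h L (wordTrunc x k) := by
      rw [wordTrunc_succ]
      exact bwdPre_append_subset hinv _ _
    exact ⟨hx.1.mono (Set.inter_subset_inter_left _ hsub),
           hx.2.mono (Set.inter_subset_inter_left _ hsub)⟩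
  have hSne : ∀ k, (S k).Nonempty := by
    intro k
    obtain ⟨w, hlen, hMw⟩ := hmeets k
    refine ⟨fun i => w.getD i ⟨0, hm⟩, ?_⟩
    have : wordTrunc (fun i => w.getD i ⟨0, hm⟩) k = w := by
      apply List.ext_getElem
      · simp [wordTrunc, hlen]
      · intro i h1 h2
        simp only [wordTrunc, List.getElem_ofFn]
        exact List.getD_eq_getElem w _ h2
    show Meets (wordTrunc _ k)
    rw [this]; exact hMw
  have hScp : IsCompact (S 0) := (hSclosed 0).isCompact
  obtain ⟨x, hx⟩ := IsCompact.nonempty_iInter_of_sequence_nonempty_isCompact_isClosed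
    S hSanti hSne hScp hSclosed
  have hxM : ∀ k, Meets (wordTrunc x k) := fun k => Set.mem_iInter.1 hx k
  -- limit set meets both A and B
  have hmain : ∀ (C : Set X), IsClosed C → (∀ k, (bwdPre h L (wordTrunc x k) ∩ C).Nonempty) →
      (bwdLimSet h L x ∩ C).Nonempty := by
    intro C hC hne
    set T : ℕ → Set X := fun j => bwdPre h L (wordTrunc x (j+1)) ∩ C with hT
    have hTanti : ∀ j, T (j+1) ⊆ T j := by
      intro j
      apply Set.inter_subset_inter_left
      rw [wordTrunc_succ]
      exact bwdPre_append_subset hinv _ _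
    have hTne : ∀ j, (T j).Nonempty := fun j => hne (j+1)
    have hTclosed : ∀ j, IsClosed (T j) :=
      fun j => (bwdPre_isClosed hcont hLc _).inter hC
    have hTcp : IsCompact (T 0) :=
      hLcp.of_isClosed_subset (hTclosed 0)
        ((Set.inter_subset_left).trans (bwdPre_subset hinv _))
    have := IsCompact.nonempty_iInter_of_sequence_nonempty_isCompact_isClosed
      T hTanti hTne hTcp hTclosed
    rwa [show (⋂ j, T j) = bwdLimSet h L x ∩ C by
      rw [bwdLimSet, Set.iInter_inter]] at this
  have hxA := hmain A hA (fun k => (hxM k).1)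
  have hxB := hmain B hB (fun k => (hxM k).2)
  -- contradiction with connectedness
  have hEL : bwdLimSet h L x ⊆ L :=
    (Set.iInter_subset _ 0).trans (bwdPre_subset hinv _)
  have hsubAB : bwdLimSet h L x ⊆ A ∪ B := by rw [hAB]; exact hEL
  have hEA : bwdLimSet h L x ⊆ A :=
    preconn_subset_of_closed (hconn x).isPreconnected hA hB hd hsubAB hxA
  obtain ⟨z, hz1, hz2⟩ := hxB
  exact Set.disjoint_left.1 hd (hEA hz1) hz2
end Aux3

/-- Union of pieces over a connected component of `Γ_n`. -/
def Ucomp {X : Type*} {m : ℕ} (h : Fin m → X → X) (L : Set X) (n : ℕ)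
    (c : (bwdGraph h L n).ConnectedComponent) : Set X :=
  ⋃ w ∈ {w : Fin n → Fin m | (bwdGraph h L n).connectedComponentMk w = c},
    bwdPre h L (List.ofFn w)

section Aux4
variable {X : Type*} [MetricSpace X] {m : ℕ} {h : Fin m → X → X} {L : Set X}

instance bwdGraph_comp_finite {n : ℕ} : Finite ((bwdGraph h L n).ConnectedComponent) :=
  Finite.of_surjective ((bwdGraph h L n).connectedComponentMk)
    (fun c => c.ind (fun v => ⟨v, rfl⟩))

lemma subset_Ucomp {n : ℕ} (w : Fin n → Fin m) :
    bwdPre h L (List.ofFn w) ⊆ Ucomp h L n ((bwdGraph h L n).connectedComponentMk w) :=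
  fun x hx => Set.mem_biUnion rfl hx

lemma Ucomp_subset (hinv : L = ⋃ j, h j ⁻¹' L) {n : ℕ}
    (c : (bwdGraph h L n).ConnectedComponent) : Ucomp h L n c ⊆ L :=
  Set.iUnion₂_subset fun w _ => bwdPre_subset hinv _

lemma Ucomp_disjoint {n : ℕ} {c c' : (bwdGraph h L n).ConnectedComponent} (hcc : c ≠ c') :
    Disjoint (Ucomp h L n c) (Ucomp h L n c') := by
  rw [Set.disjoint_left]
  rintro x hx hx'
  obtain ⟨w, hw, hxw⟩ := Set.mem_iUnion₂.1 hx
  obtain ⟨w', hw', hxw'⟩ := Set.mem_iUnion₂.1 hx'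
  have hne : w ≠ w' := by
    rintro rfl
    exact hcc (hw ▸ hw')
  have hadj : (bwdGraph h L n).Adj w w' := ⟨hne, ⟨x, hxw, hxw'⟩⟩
  exact hcc (hw ▸ hw' ▸ (SimpleGraph.ConnectedComponent.eq.2 hadj.reachable))

lemma Ucomp_isClosed (hcont : ∀ j, Continuous (h j)) (hLc : IsClosed L) {n : ℕ}
    (c : (bwdGraph h L n).ConnectedComponent) : IsClosed (Ucomp h L n c) :=
  Set.Finite.isClosed_biUnion (Set.toFinite _)
    (fun w _ => bwdPre_isClosed hcont hLc _)

lemma Ucomp_nonempty (hLne : L.Nonempty) (hinv : L = ⋃ j, h j ⁻¹' L)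
    (hfib : ∀ z ∈ L, ∀ j, (h j ⁻¹' ({z} : Set X)).Nonempty) {n : ℕ}
    (c : (bwdGraph h L n).ConnectedComponent) : (Ucomp h L n c).Nonempty := by
  induction c using SimpleGraph.ConnectedComponent.ind with
  | _ w => exact (bwdPre_nonempty hLne hinv hfib (List.ofFn w)).mono (subset_Ucomp w)

lemma L_subset_iUnion_Ucomp (hinv : L = ⋃ j, h j ⁻¹' L) (n : ℕ) :
    L ⊆ ⋃ c, Ucomp h L n c := by
  intro x hx
  obtain ⟨w, hw⟩ := exists_word hinv n x hx
  exact Set.mem_iUnion.2 ⟨_, subset_Ucomp w hw⟩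

/-- A connected subset of `L` meeting `Ucomp c` is contained in it. -/
lemma preconn_subset_Ucomp (hcont : ∀ j, Continuous (h j)) (hLcp : IsCompact L)
    (hinv : L = ⋃ j, h j ⁻¹' L) {n : ℕ} {E : Set X} (hE : IsPreconnected E)
    (hEL : E ⊆ L) {c : (bwdGraph h L n).ConnectedComponent}
    (hne : (E ∩ Ucomp h L n c).Nonempty) : E ⊆ Ucomp h L n c := by
  classical
  set B : Set X := ⋃ c' ∈ {c' : (bwdGraph h L n).ConnectedComponent | c' ≠ c},
    Ucomp h L n c' with hBdef
  have hBc : IsClosed B :=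
    Set.Finite.isClosed_biUnion (Set.toFinite _)
      (fun c' _ => Ucomp_isClosed hcont hLcp.isClosed c')
  have hdisj : Disjoint (Ucomp h L n c) B := by
    rw [Set.disjoint_left]
    rintro x hx hx'
    obtain ⟨c', hc', hxc'⟩ := Set.mem_iUnion₂.1 hx'
    exact Set.disjoint_left.1 (Ucomp_disjoint hc') hxc' hx
  have hsub : E ⊆ Ucomp h L n c ∪ B := by
    intro x hx
    obtain ⟨c', hc'⟩ := Set.mem_iUnion.1 (L_subset_iUnion_Ucomp hinv n (hEL hx))
    by_cases hcc : c' = c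
    · exact Or.inl (hcc ▸ hc')
    · exact Or.inr (Set.mem_biUnion hcc hc')
  exact preconn_subset_of_closed hE (Ucomp_isClosed hcont hLcp.isClosed c) hBc hdisj hsub hne
end Aux4

section Aux5
variable {X : Type*} [MetricSpace X] {m : ℕ} {h : Fin m → X → X} {L : Set X}

lemma compin_isClosed (hLc : IsClosed L) {y : X} (hy : y ∈ L) :
    IsClosed (connectedComponentIn L y) := by
  rw [connectedComponentIn_eq_image hy]
  exact (hLc.isClosedEmbedding_subtypeVal).isClosedMap _ isClosed_connectedComponent

lemma compin_diff_eq {y : X} (hy : y ∈ L) :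
    L \ connectedComponentIn L y =
      ⋃ C ∈ {C : Set X | ∃ z ∈ L, C = connectedComponentIn L z} \ {connectedComponentIn L y},
        C := by
  ext x
  constructor
  · rintro ⟨hxL, hxE⟩
    refine Set.mem_biUnion ⟨⟨x, hxL, rfl⟩, ?_⟩ (mem_connectedComponentIn hxL)
    intro heq
    rw [Set.mem_singleton_iff] at heq
    exact hxE (heq ▸ mem_connectedComponentIn hxL)
  · rintro hx
    obtain ⟨C, ⟨⟨z, hzL, rfl⟩, hCne⟩, hxC⟩ := Set.mem_iUnion₂.1 hx
    refine ⟨connectedComponentIn_subset _ _ hxC, fun hxE => ?_⟩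
    apply hCne
    rw [Set.mem_singleton_iff, connectedComponentIn_eq hxC, connectedComponentIn_eq hxE]

lemma compin_compl_isClosed
    (hS : {C : Set X | ∃ z ∈ L, C = connectedComponentIn L z}.Finite)
    (hLc : IsClosed L) {y : X} (hy : y ∈ L) :
    IsClosed (L \ connectedComponentIn L y) := by
  rw [compin_diff_eq hy]
  exact Set.Finite.isClosed_biUnion (hS.subset Set.diff_subset)
    (fun C hC => by
      obtain ⟨⟨z, hzL, rfl⟩, -⟩ := hC
      exact compin_isClosed hLc hzL)

lemma comps_le_ncard (hcont : ∀ j, Continuous (h j)) (hLne : L.Nonempty)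
    (hLcp : IsCompact L) (hinv : L = ⋃ j, h j ⁻¹' L)
    (hfib : ∀ z ∈ L, ∀ j, (h j ⁻¹' ({z} : Set X)).Nonempty)
    (hS : {C : Set X | ∃ z ∈ L, C = connectedComponentIn L z}.Finite) (n : ℕ) :
    Nat.card ((bwdGraph h L n).ConnectedComponent) ≤
      {C : Set X | ∃ z ∈ L, C = connectedComponentIn L z}.ncard := by
  classical
  haveI := hS.to_subtype
  set S := {C : Set X | ∃ z ∈ L, C = connectedComponentIn L z} with hSdef
  have hpt : ∀ c : (bwdGraph h L n).ConnectedComponent, (Ucomp h L n c).Nonempty :=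
    Ucomp_nonempty hLne hinv hfib
  have hptL : ∀ c, (hpt c).some ∈ L := fun c => Ucomp_subset hinv c (hpt c).some_mem
  set φ : (bwdGraph h L n).ConnectedComponent → ↥S :=
    fun c => ⟨connectedComponentIn L (hpt c).some, ⟨_, hptL c, rfl⟩⟩ with hφdef
  have hφinj : Function.Injective φ := by
    intro c c' hcc
    by_contra hne
    have hE : ∀ c : (bwdGraph h L n).ConnectedComponent,
        connectedComponentIn L (hpt c).some ⊆ Ucomp h L n c := by
      intro c
      apply preconn_subset_Ucomp hcont hLcp hinv
        (isConnected_connectedComponentIn_iff.2 (hptL c)).isPreconnected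
        (connectedComponentIn_subset _ _)
      exact ⟨(hpt c).some, mem_connectedComponentIn (hptL c), (hpt c).some_mem⟩
    have h1 : (hpt c).some ∈ connectedComponentIn L (hpt c').some := by
      have : connectedComponentIn L (hpt c).some = connectedComponentIn L (hpt c').some :=
        congrArg Subtype.val hcc
      exact this ▸ mem_connectedComponentIn (hptL c)
    exact Set.disjoint_left.1 (Ucomp_disjoint hne)
      (hE c (mem_connectedComponentIn (hptL c))) (hE c' h1)
  calc Nat.card ((bwdGraph h L n).ConnectedComponent) ≤ Nat.card ↥S :=
        Nat.card_le_card_of_injective φ hφinj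
    _ = S.ncard := Nat.card_coe_set_eq S
end Aux5

section Aux6
variable {X : Type*} [MetricSpace X] {m : ℕ} {h : Fin m → X → X} {L : Set X}

lemma comps_eq_ncard (hm : 1 ≤ m) (hcont : ∀ j, Continuous (h j)) (hLne : L.Nonempty)
    (hLcp : IsCompact L) (hinv : L = ⋃ j, h j ⁻¹' L)
    (hfib : ∀ z ∈ L, ∀ j, (h j ⁻¹' ({z} : Set X)).Nonempty)
    (hconn : ∀ x : ℕ → Fin m, IsConnected (bwdLimSet h L x))
    (hS : {C : Set X | ∃ z ∈ L, C = connectedComponentIn L z}.Finite) :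
    ∃ K : ℕ, ∀ n ≥ K, Nat.card ((bwdGraph h L n).ConnectedComponent) =
      {C : Set X | ∃ z ∈ L, C = connectedComponentIn L z}.ncard := by
  classical
  haveI := hS.to_subtype
  set S := {C : Set X | ∃ z ∈ L, C = connectedComponentIn L z} with hSdef
  -- for each component of L, an eventual dichotomy threshold
  have hdich : ∀ E : ↥S, ∃ K : ℕ, ∀ w : List (Fin m), K ≤ w.length →
      bwdPre h L w ⊆ (E : Set X) ∨ bwdPre h L w ⊆ L \ (E : Set X) := by
    rintro ⟨E, z, hzL, rfl⟩
    exact eventually_dichotomy hm hcont hLne hLcp hinv hfib hconn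
      (compin_isClosed hLcp.isClosed hzL) (compin_compl_isClosed hS hLcp.isClosed hzL)
      (Set.union_diff_cancel (connectedComponentIn_subset _ _))
      (Set.disjoint_sdiff_right)
  choose g hg using hdich
  obtain ⟨K, hK⟩ := Finite.exists_le g
  refine ⟨K, fun n hn => ?_⟩
  -- point and word for each component of L
  set y : ↥S → X := fun E => (E.2).choose with hydef
  have hyL : ∀ E : ↥S, y E ∈ L := fun E => (E.2).choose_spec.1
  have hyE : ∀ E : ↥S, (E : Set X) = connectedComponentIn L (y E) :=
    fun E => (E.2).choose_spec.2
  have hyEmem : ∀ E : ↥S, y E ∈ (E : Set X) :=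
    fun E => (hyE E) ▸ mem_connectedComponentIn (hyL E)
  have hw : ∀ E : ↥S, ∃ w : Fin n → Fin m, y E ∈ bwdPre h L (List.ofFn w) :=
    fun E => exists_word hinv n (y E) (hyL E)
  set w : ↥S → (Fin n → Fin m) := fun E => (hw E).choose with hwdef
  have hwmem : ∀ E, y E ∈ bwdPre h L (List.ofFn (w E)) := fun E => (hw E).choose_spec
  -- the dichotomy at level n, in intersection form
  have hdich' : ∀ (E : ↥S) (v : Fin n → Fin m),
      bwdPre h L (List.ofFn v) ⊆ (E : Set X) ∨
        bwdPre h L (List.ofFn v) ∩ (E : Set X) = ∅ := by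
    intro E v
    rcases hg E (List.ofFn v) (by simpa using (hK E).trans hn) with h1 | h1
    · exact Or.inl h1
    · refine Or.inr (Set.eq_empty_of_forall_notMem fun x ⟨hx1, hx2⟩ => ?_)
      exact (h1 hx1).2 hx2
  have hwsub : ∀ E : ↥S, bwdPre h L (List.ofFn (w E)) ⊆ (E : Set X) := by
    intro E
    rcases hdich' E (w E) with h1 | h1
    · exact h1
    · exact absurd (Set.mem_inter (hwmem E) (hyEmem E))
        (by rw [h1]; exact Set.notMem_empty _)
  set θ : ↥S → (bwdGraph h L n).ConnectedComponent :=
    fun E => (bwdGraph h L n).connectedComponentMk (w E) with hθdef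
  have hθinj : Function.Injective θ := by
    intro E E' hEE
    have hsub : bwdPre h L (List.ofFn (w E')) ⊆ (E : Set X) :=
      comp_subset (hdich' E) hEE (hwsub E)
    have : y E' ∈ (E : Set X) := hsub (hwmem E')
    apply Subtype.ext
    rw [hyE E, hyE E', connectedComponentIn_eq (show y E' ∈ connectedComponentIn L (y E)
      from (hyE E) ▸ this)]
  have hle := comps_le_ncard hcont hLne hLcp hinv hfib hS n
  have hge : S.ncard ≤ Nat.card ((bwdGraph h L n).ConnectedComponent) := by
    rw [← Nat.card_coe_set_eq]
    exact Nat.card_le_card_of_injective θ hθinj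
  exact le_antisymm hle hge
end Aux6

section Aux7
variable {X : Type*} [MetricSpace X] {m : ℕ} {h : Fin m → X → X} {L : Set X}

lemma finite_of_bounded (hm : 1 ≤ m) (hcont : ∀ j, Continuous (h j)) (hLne : L.Nonempty)
    (hLcp : IsCompact L) (hinv : L = ⋃ j, h j ⁻¹' L)
    (hfib : ∀ z ∈ L, ∀ j, (h j ⁻¹' ({z} : Set X)).Nonempty)
    (hconn : ∀ x : ℕ → Fin m, IsConnected (bwdLimSet h L x)) {N : ℕ}
    (hN : ∀ k : ℕ, Nat.card ((bwdGraph h L (k + 1)).ConnectedComponent) ≤ N) :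
    {C : Set X | ∃ z ∈ L, C = connectedComponentIn L z}.Finite := by
  classical
  by_contra hinf
  have hinfS : {C : Set X | ∃ z ∈ L, C = connectedComponentIn L z}.Infinite := hinf
  obtain ⟨t, htS, htcard⟩ := hinfS.exists_subset_card_eq (N + 1)
  have e : Fin (N + 1) ≃ ↥t := ((t.equivFin).trans (finCongr htcard)).symm
  set E : Fin (N + 1) → Set X := fun i => (e i : Set X) with hEdef
  have hEinj : Function.Injective E := fun i j hij => e.injective (Subtype.ext hij)
  have hES : ∀ i, ∃ z ∈ L, E i = connectedComponentIn L z := fun i => htS (e i).2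
  choose z hzL hzE using hES
  haveI : CompactSpace ↥L := isCompact_iff_compactSpace.1 hLcp
  set p : Fin (N + 1) → ↥L := fun i => ⟨z i, hzL i⟩ with hpdef
  have hcompne : ∀ i j, i ≠ j → connectedComponent (p i) ≠ connectedComponent (p j) := by
    intro i j hij hc
    exact hij (hEinj (by
      rw [hzE i, hzE j, connectedComponentIn_eq_image (hzL i),
        connectedComponentIn_eq_image (hzL j)]
      exact congrArg _ hc))
  have hsep : ∀ i j : Fin (N + 1), ∃ s : Set ↥L, IsClopen s ∧ p i ∈ s ∧ (i ≠ j → p j ∉ s) := by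
    intro i j
    by_cases hij : i = j
    · exact ⟨Set.univ, isClopen_univ, trivial, fun hne => absurd hij hne⟩
    · have hnm : p j ∉ connectedComponent (p i) := by
        intro hmem
        exact hcompne i j hij (connectedComponent_eq hmem)
      rw [connectedComponent_eq_iInter_isClopen] at hnm
      simp only [Set.mem_iInter, not_forall] at hnm
      obtain ⟨⟨s, hscl, hsi⟩, hsj⟩ := hnm
      exact ⟨s, hscl, hsi, fun _ => hsj⟩
  choose V hVcl hVmem hVnot using hsep
  set A : Fin (N + 1) → Set ↥L := fun i => ⋂ j, V i j with hAdef
  have hAcl : ∀ i, IsClopen (A i) := fun i =>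
    ⟨isClosed_iInter fun j => (hVcl i j).1, isOpen_iInter_of_finite fun j => (hVcl i j).2⟩
  have hAmem : ∀ i, p i ∈ A i := fun i => Set.mem_iInter.2 fun j => hVmem i j
  have hAnot : ∀ i j, i ≠ j → p j ∉ A i := fun i j hij hmem =>
    hVnot i j hij (Set.mem_iInter.1 hmem j)
  set B : Fin (N + 1) → Set ↥L := fun i => A i \ ⋃ j ∈ {j : Fin (N + 1) | j < i}, A j
    with hBdef
  have hBcl : ∀ i, IsClopen (B i) := fun i =>
    (hAcl i).diff ⟨Set.Finite.isClosed_biUnion (Set.toFinite _) fun j _ => (hAcl j).1,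
      isOpen_biUnion fun j _ => (hAcl j).2⟩
  have hBmem : ∀ i, p i ∈ B i := by
    intro i
    refine ⟨hAmem i, fun hmem => ?_⟩
    obtain ⟨j, hji, hpj⟩ := Set.mem_iUnion₂.1 hmem
    exact hAnot j i (ne_of_lt hji) hpj
  have hBdisj : ∀ i j, i ≠ j → Disjoint (B i) (B j) := by
    have key : ∀ i j, i < j → Disjoint (B i) (B j) := by
      intro i j hij
      rw [Set.disjoint_left]
      intro x hxi hxj
      exact hxj.2 (Set.mem_biUnion hij hxi.1)
    intro i j hij
    rcases hij.lt_or_gt with hlt | hlt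
    · exact key i j hlt
    · exact (key j i hlt).symm
  -- push to X
  have hLc : IsClosed L := hLcp.isClosed
  set C : Fin (N + 1) → Set X := fun i => Subtype.val '' B i with hCdef
  set D : Fin (N + 1) → Set X := fun i => Subtype.val '' (B i)ᶜ with hDdef
  have hCcl : ∀ i, IsClosed (C i) := fun i =>
    (hLc.isClosedEmbedding_subtypeVal).isClosedMap _ (hBcl i).1
  have hDcl : ∀ i, IsClosed (D i) := fun i =>
    (hLc.isClosedEmbedding_subtypeVal).isClosedMap _ ((hBcl i).compl).1
  have hCD : ∀ i, C i ∪ D i = L := by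
    intro i
    rw [hCdef, hDdef, ← Set.image_union, Set.union_compl_self, Set.image_univ,
      Subtype.range_coe]
  have hCDdisj : ∀ i, Disjoint (C i) (D i) := fun i =>
    (Set.disjoint_image_iff Subtype.val_injective).2 disjoint_compl_right
  have hCdisj : ∀ i j, i ≠ j → Disjoint (C i) (C j) := fun i j hij =>
    (Set.disjoint_image_iff Subtype.val_injective).2 (hBdisj i j hij)
  -- dichotomy thresholds
  have hdich : ∀ i, ∃ K : ℕ, ∀ w : List (Fin m), K ≤ w.length →
      bwdPre h L w ⊆ C i ∨ bwdPre h L w ⊆ D i := fun i =>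
    eventually_dichotomy hm hcont hLne hLcp hinv hfib hconn (hCcl i) (hDcl i) (hCD i)
      (hCDdisj i)
  choose g hg using hdich
  obtain ⟨K, hK⟩ := Finite.exists_le g
  -- words at level K + 1
  have hw : ∀ i, ∃ w : Fin (K + 1) → Fin m, z i ∈ bwdPre h L (List.ofFn w) := fun i =>
    exists_word hinv (K + 1) (z i) (hzL i)
  choose w hwmem using hw
  have hzC : ∀ i, z i ∈ C i := fun i => ⟨p i, hBmem i, rfl⟩
  have hdich' : ∀ (i) (v : Fin (K + 1) → Fin m),
      bwdPre h L (List.ofFn v) ⊆ C i ∨ bwdPre h L (List.ofFn v) ∩ C i = ∅ := by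
    intro i v
    rcases hg i (List.ofFn v) (by simpa using (hK i).trans (Nat.le_succ K)) with h1 | h1
    · exact Or.inl h1
    · refine Or.inr (Set.eq_empty_of_forall_notMem fun x ⟨hx1, hx2⟩ => ?_)
      exact Set.disjoint_left.1 (hCDdisj i) hx2 (h1 hx1)
  have hwsub : ∀ i, bwdPre h L (List.ofFn (w i)) ⊆ C i := by
    intro i
    rcases hdich' i (w i) with h1 | h1
    · exact h1
    · exact absurd (Set.mem_inter (hwmem i) (hzC i)) (by rw [h1]; exact Set.notMem_empty _)
  set f : Fin (N + 1) → (bwdGraph h L (K + 1)).ConnectedComponent :=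
    fun i => (bwdGraph h L (K + 1)).connectedComponentMk (w i) with hfdef
  have hfinj : Function.Injective f := by
    intro i j hij
    by_contra hne
    have hsub : bwdPre h L (List.ofFn (w j)) ⊆ C i := comp_subset (hdich' i) hij (hwsub i)
    exact Set.disjoint_left.1 (hCdisj i j hne) (hsub (hwmem j)) (hzC j)
  have hcard : N + 1 ≤ Nat.card ((bwdGraph h L (K + 1)).ConnectedComponent) := by
    have := Nat.card_le_card_of_injective f hfinj
    simpa using this
  have := hN K
  omega
end Aux7

section Aux8
variable {X : Type*} [MetricSpace X] {m : ℕ} {h : Fin m → X → X} {L : Set X}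

lemma comps_mono (hm : 1 ≤ m) (hinv : L = ⋃ j, h j ⁻¹' L) (n : ℕ) :
    Nat.card ((bwdGraph h L n).ConnectedComponent) ≤
      Nat.card ((bwdGraph h L (n + 1)).ConnectedComponent) := by
  classical
  have key : ∀ w : Fin (n + 1) → Fin m, bwdPre h L (List.ofFn w) ⊆
      bwdPre h L (List.ofFn fun i : Fin n => w i.castSucc) := by
    intro w
    have heq : List.ofFn w = (List.ofFn fun i : Fin n => w i.castSucc) ++ [w (Fin.last n)] := by
      rw [List.ofFn_succ']
      simp [List.concat_eq_append]
    rw [heq]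
    exact bwdPre_append_subset hinv _ _
  set mkT : (Fin (n + 1) → Fin m) → (bwdGraph h L n).ConnectedComponent :=
    fun w => (bwdGraph h L n).connectedComponentMk (fun i => w i.castSucc) with hmkT
  have hadjcomp : ∀ (v w' : Fin (n + 1) → Fin m), (bwdGraph h L (n + 1)).Adj v w' →
      mkT v = mkT w' := by
    rintro v w' ⟨hne, x, hx1, hx2⟩
    by_cases heq : (fun i : Fin n => v i.castSucc) = (fun i => w' i.castSucc)
    · show (bwdGraph h L n).connectedComponentMk _ = (bwdGraph h L n).connectedComponentMk _
      rw [heq]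
    · exact SimpleGraph.ConnectedComponent.eq.2
        (SimpleGraph.Adj.reachable ⟨heq, ⟨x, key v hx1, key w' hx2⟩⟩)
  have hwalk : ∀ (v w' : Fin (n + 1) → Fin m) (p : (bwdGraph h L (n + 1)).Walk v w'),
      mkT v = mkT w' := by
    intro v w' p
    induction p with
    | nil => rfl
    | cons hadj p ih => exact (hadjcomp _ _ hadj).trans ih
  set f : (bwdGraph h L (n + 1)).ConnectedComponent → (bwdGraph h L n).ConnectedComponent :=
    SimpleGraph.ConnectedComponent.lift mkT (fun v w' p _ => hwalk v w' p) with hfdef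
  have hfsurj : Function.Surjective f := by
    intro c
    induction c using SimpleGraph.ConnectedComponent.ind with
    | _ w =>
      set w' : Fin (n + 1) → Fin m := Fin.snoc w ⟨0, hm⟩ with hw'def
      refine ⟨(bwdGraph h L (n + 1)).connectedComponentMk w', ?_⟩
      have heqw : (fun i : Fin n => w' i.castSucc) = w := by
        funext i
        simp [hw'def, Fin.snoc_castSucc]
      show (bwdGraph h L n).connectedComponentMk (fun i : Fin n => w' i.castSucc) =
        (bwdGraph h L n).connectedComponentMk w
      rw [heqw]
  exact Nat.card_le_card_of_surjective f hfsurj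
end Aux8


/-- For a backward self-similar system with all `L_x` connected: the number `c_k` of
connected components of `Γ_k` is nondecreasing in `k`; the sequence `(c_k)` is bounded
iff `L` has finitely many connected components; and if `L` has finitely many connected
components then `c_k` equals that number for all sufficiently large `k`. -/
theorem backward_component_counts
    {X : Type*} [MetricSpace X] {m : ℕ} (hm : 1 ≤ m)
    (h : Fin m → X → X) (hcont : ∀ j, Continuous (h j))
    (L : Set X) (hLne : L.Nonempty) (hLcp : IsCompact L)
    (hinv : L = ⋃ j, h j ⁻¹' L)
    (hfib : ∀ z ∈ L, ∀ j, (h j ⁻¹' ({z} : Set X)).Nonempty)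
    (hconn : ∀ x : ℕ → Fin m, IsConnected (bwdLimSet h L x)) :
    (∀ k : ℕ, Nat.card ((bwdGraph h L (k + 1)).ConnectedComponent) ≤
        Nat.card ((bwdGraph h L (k + 2)).ConnectedComponent)) ∧
    ((∃ N : ℕ, ∀ k : ℕ, Nat.card ((bwdGraph h L (k + 1)).ConnectedComponent) ≤ N) ↔
        {C : Set X | ∃ y ∈ L, C = connectedComponentIn L y}.Finite) ∧
    ({C : Set X | ∃ y ∈ L, C = connectedComponentIn L y}.Finite →
      ∃ K : ℕ, ∀ k ≥ K, Nat.card ((bwdGraph h L (k + 1)).ConnectedComponent) =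
        {C : Set X | ∃ y ∈ L, C = connectedComponentIn L y}.ncard) := by
  refine ⟨fun k => comps_mono hm hinv (k + 1), ⟨?_, ?_⟩, ?_⟩
  · rintro ⟨N, hN⟩
    exact finite_of_bounded hm hcont hLne hLcp hinv hfib hconn hN
  · intro hS
    exact ⟨{C : Set X | ∃ y ∈ L, C = connectedComponentIn L y}.ncard,
      fun k => comps_le_ncard hcont hLne hLcp hinv hfib hS (k + 1)⟩
  · intro hS
    obtain ⟨K, hK⟩ := comps_eq_ncard hm hcont hLne hLcp hinv hfib hconn hS
    exact ⟨K, fun k hk => hK (k + 1) (by omega)⟩
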